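/- Let p be holomorphic and nonvanishing on the upper half-plane U and q holomorphic with |q| < 1 on U, and suppose the Weierstrass–Enneper data satisfy |p(i)|(1 + |q(i)|²) ≥ 1 (the Heinz bound at i). Then the Gauss curvature K(i) = −4|q'(i)|²/(|p(i)|²(1 + |q(i)|²)⁴) satisfies |K(i)| ≤ 1. -/

import Mathlib

/-!
At `i` the Heinz bound says that the conformal factor `λ = |p|(1 + |q|²)` of the minimal surface
is at least `1`, so `|K(i)| = 4|q'(i)|² / (λ² (1 + |q(i)|²)²) ≤ 4|q'(i)|² / (1 + |q(i)|²)²`.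
Composing `q` with the Cayley map `w ↦ i(1 + w)/(1 - w)`, which sends `0` to `i` with derivative
`2i`, and applying the Schwarz–Pick lemma at the centre of the unit disc gives
`2|q'(i)| ≤ 1 - |q(i)|² ≤ 1 + |q(i)|²`.
-/

set_option autoImplicit false
open Complex Set Metric ComplexConjugate

lemma one_sub_ne_zero_of_norm_lt_one {w : ℂ} (hw : ‖w‖ < 1) : 1 - w ≠ 0 :=
  sub_ne_zero.2 fun h => by simp [← h] at hw

noncomputable def discMoebius (a w : ℂ) : ℂ := (w - a) / (1 - conj a * w)

lemma one_sub_conj_mul_ne_zero {a w : ℂ} (ha : ‖a‖ < 1) (hw : ‖w‖ < 1) :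
    1 - conj a * w ≠ 0 := by
  refine one_sub_ne_zero_of_norm_lt_one ?_
  rw [norm_mul, RCLike.norm_conj]
  nlinarith [norm_nonneg a, norm_nonneg w]

lemma norm_discMoebius_lt_one {a w : ℂ} (ha : ‖a‖ < 1) (hw : ‖w‖ < 1) :
    ‖discMoebius a w‖ < 1 := by
  have hden := one_sub_conj_mul_ne_zero ha hw
  rw [discMoebius, norm_div, div_lt_one (norm_pos_iff.2 hden)]
  have hgap : ‖1 - conj a * w‖ ^ 2 - ‖w - a‖ ^ 2 = (1 - ‖a‖ ^ 2) * (1 - ‖w‖ ^ 2) := by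
    simp only [← normSq_eq_norm_sq, normSq_apply, sub_re, sub_im, mul_re, mul_im, conj_re,
      conj_im, one_re, one_im]
    ring
  have hpos : 0 < (1 - ‖a‖ ^ 2) * (1 - ‖w‖ ^ 2) := by
    apply mul_pos <;> nlinarith [norm_nonneg a, norm_nonneg w]
  exact pow_lt_pow_iff_left₀ (norm_nonneg _) (norm_nonneg _) two_ne_zero |>.1 (by linarith)

lemma differentiableOn_discMoebius {a : ℂ} (ha : ‖a‖ < 1) :
    DifferentiableOn ℂ (discMoebius a) (ball 0 1) :=
  (differentiableOn_id.sub_const a).div ((differentiableOn_const 1).sub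
    (differentiableOn_id.const_mul (conj a)))
    fun _ hw => one_sub_conj_mul_ne_zero ha (mem_ball_zero_iff.1 hw)

lemma hasDerivAt_discMoebius_self {a : ℂ} (ha : ‖a‖ < 1) :
    HasDerivAt (discMoebius a) ((1 - ‖a‖ ^ 2 : ℝ) : ℂ)⁻¹ a := by
  have hden := one_sub_conj_mul_ne_zero ha ha
  have h := ((hasDerivAt_id a).sub_const a).div
    (((hasDerivAt_id a).const_mul (conj a)).const_sub 1) hden
  refine h.congr_deriv ?_
  rw [conj_mul'] at hden
  simp only [id, sub_self, zero_mul, sub_zero, mul_one, conj_mul']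
  push_cast
  field_simp

theorem mul_norm_deriv_le_one_sub_sq_of_mapsTo_ball {f : ℂ → ℂ} {c : ℂ} {R : ℝ}
    (hd : DifferentiableOn ℂ f (ball c R)) (hf : MapsTo f (ball c R) (ball 0 1)) (hR : 0 < R) :
    R * ‖deriv f c‖ ≤ 1 - ‖f c‖ ^ 2 := by
  have hc : c ∈ ball c R := mem_ball_self hR
  have hfc : ‖f c‖ < 1 := mem_ball_zero_iff.1 (hf hc)
  have hgd : DifferentiableOn ℂ (discMoebius (f c) ∘ f) (ball c R) :=
    (differentiableOn_discMoebius hfc).comp hd hf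
  have hg_maps :
      MapsTo (discMoebius (f c) ∘ f) (ball c R) (closedBall ((discMoebius (f c) ∘ f) c) 1) := by
    intro z hz
    simp only [Function.comp_apply, discMoebius, sub_self, zero_div, mem_closedBall_zero_iff]
    exact (norm_discMoebius_lt_one hfc (mem_ball_zero_iff.1 (hf hz))).le
  have hschwarz := Complex.norm_deriv_le_div_of_mapsTo_ball hgd hg_maps hR
  have hderiv := ((hasDerivAt_discMoebius_self hfc).comp c
    (hd.differentiableAt (isOpen_ball.mem_nhds hc)).hasDerivAt).deriv
  have hpos : 0 < 1 - ‖f c‖ ^ 2 := by nlinarith [norm_nonneg (f c)]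
  rw [hderiv, norm_mul, norm_inv, norm_real, Real.norm_of_nonneg hpos.le,
    inv_mul_le_iff₀ hpos, mul_one_div, le_div_iff₀ hR] at hschwarz
  linarith

noncomputable def cayley (w : ℂ) : ℂ := I * (1 + w) / (1 - w)

lemma cayley_zero : cayley 0 = I := by simp [cayley]

lemma im_cayley_pos {w : ℂ} (hw : ‖w‖ < 1) : 0 < (cayley w).im := by
  have hden : 0 < normSq (1 - w) := normSq_pos.2 (one_sub_ne_zero_of_norm_lt_one hw)
  have hw2 : normSq w < 1 := by rw [normSq_eq_norm_sq]; nlinarith [norm_nonneg w]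
  have him : (cayley w).im = (1 - normSq w) / normSq (1 - w) := by
    rw [cayley, div_im]
    field_simp
    simp only [normSq_apply, mul_re, mul_im, add_re, add_im, sub_re, sub_im, one_re, one_im,
      I_re, I_im]
    ring
  rw [him]
  exact div_pos (by linarith) hden

lemma differentiableOn_cayley : DifferentiableOn ℂ cayley (ball 0 1) :=
  ((differentiableOn_const 1).add differentiableOn_id).const_mul I |>.div
    ((differentiableOn_const 1).sub differentiableOn_id)
    fun _ hw => one_sub_ne_zero_of_norm_lt_one (mem_ball_zero_iff.1 hw)

lemma hasDerivAt_cayley_zero : HasDerivAt cayley (2 * I) 0 := by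
  have h := (((hasDerivAt_id (0 : ℂ)).const_add 1).const_mul I).div
    ((hasDerivAt_id (0 : ℂ)).const_sub 1) (by norm_num)
  refine h.congr_deriv ?_
  norm_num
  ring

theorem two_mul_norm_deriv_I_le_one_sub_sq {q : ℂ → ℂ}
    (hd : DifferentiableOn ℂ q {z : ℂ | 0 < z.im}) (hq : MapsTo q {z : ℂ | 0 < z.im} (ball 0 1)) :
    2 * ‖deriv q I‖ ≤ 1 - ‖q I‖ ^ 2 := by
  have hcayley : MapsTo cayley (ball 0 1) {z : ℂ | 0 < z.im} :=
    fun w hw => im_cayley_pos (mem_ball_zero_iff.1 hw)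
  have hderiv : deriv (q ∘ cayley) 0 = deriv q I * (2 * I) := by
    have hq_diff : DifferentiableAt ℂ q (cayley 0) := hd.differentiableAt
      (UpperHalfPlane.isOpen_upperHalfPlaneSet.mem_nhds (by simp [cayley_zero]))
    rw [(hq_diff.hasDerivAt.comp 0 hasDerivAt_cayley_zero).deriv, cayley_zero]
  have := mul_norm_deriv_le_one_sub_sq_of_mapsTo_ball (hd.comp differentiableOn_cayley hcayley)
    (hq.comp hcayley) one_pos
  simpa [hderiv, cayley_zero, mul_comm] using this

noncomputable def gaussCurvature (p q : ℂ → ℂ) (z : ℂ) : ℝ :=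
  -(4 * ‖deriv q z‖ ^ 2) / (‖p z‖ ^ 2 * (1 + ‖q z‖ ^ 2) ^ 4)

lemma abs_gaussCurvature_le_one {p q : ℂ → ℂ} {z : ℂ}
    (hpick : 2 * ‖deriv q z‖ ≤ 1 - ‖q z‖ ^ 2) (hheinz : 1 ≤ ‖p z‖ * (1 + ‖q z‖ ^ 2)) :
    |gaussCurvature p q z| ≤ 1 := by
  set x := ‖q z‖
  set y := ‖p z‖
  set d := ‖deriv q z‖
  have hy : 0 < y := pos_of_mul_pos_left (one_pos.trans_le hheinz) (by positivity)
  have hden : 0 < y ^ 2 * (1 + x ^ 2) ^ 4 := by positivity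
  rw [gaussCurvature, abs_div, abs_neg, abs_of_nonneg (by positivity), abs_of_pos hden,
    div_le_one hden]
  calc 4 * d ^ 2 = (2 * d) ^ 2 := by ring
    _ ≤ (1 - x ^ 2) ^ 2 := pow_le_pow_left₀ (by positivity) hpick 2
    _ ≤ (1 + x ^ 2) ^ 2 := by nlinarith [sq_nonneg x]
    _ ≤ (y * (1 + x ^ 2)) ^ 2 * (1 + x ^ 2) ^ 2 :=
      le_mul_of_one_le_left (by positivity) (one_le_pow₀ hheinz)
    _ = y ^ 2 * (1 + x ^ 2) ^ 4 := by ring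

theorem curvature_at_i_le_one_general
    (U : Set ℂ) (hU : U = {z : ℂ | 0 < z.im})
    (p q : ℂ → ℂ)
    (hq : DifferentiableOn ℂ q U) (hq1 : ∀ z ∈ U, ‖q z‖ < 1)
    (hheinz : 1 ≤ ‖p Complex.I‖ * (1 + ‖q Complex.I‖ ^ 2)) :
    |(-(4 * ‖deriv q Complex.I‖ ^ 2) /
        (‖p Complex.I‖ ^ 2 * (1 + ‖q Complex.I‖ ^ 2) ^ 4))| ≤ 1 := by
  subst hU
  have hpick := two_mul_norm_deriv_I_le_one_sub_sq hq fun z hz => mem_ball_zero_iff.2 (hq1 z hz)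
  exact abs_gaussCurvature_le_one hpick hheinz

/-- If the Weierstrass–Enneper data `p, q` on the upper half-plane satisfy the
Heinz bound `|p(i)|(1+|q(i)|²) ≥ 1`, then the Gauss curvature at `i`,
`K(i) = −4|q'(i)|²/(|p(i)|²(1+|q(i)|²)⁴)`, satisfies `|K(i)| ≤ 1`. -/
theorem curvature_at_i_le_one
    (U : Set ℂ) (hU : U = {z : ℂ | 0 < z.im})
    (p q : ℂ → ℂ)
    (hp : DifferentiableOn ℂ p U) (hp0 : ∀ z ∈ U, p z ≠ 0)
    (hq : DifferentiableOn ℂ q U) (hq1 : ∀ z ∈ U, ‖q z‖ < 1)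
    (hheinz : 1 ≤ ‖p Complex.I‖ * (1 + ‖q Complex.I‖ ^ 2)) :
    |(-(4 * ‖deriv q Complex.I‖ ^ 2) /
        (‖p Complex.I‖ ^ 2 * (1 + ‖q Complex.I‖ ^ 2) ^ 4))| ≤ 1 :=
  curvature_at_i_le_one_general U hU p q hq hq1 hheinz
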